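/- Let I : 𝓛 → ℂ be a translation-invariant linear functional (I(f(·+c)) = I(f) for f ∈ 𝓛, c ∈ k). Then there exists a unique ℂ(Γ)-linear functional ∫^F on 𝓛(F) satisfying ∫^F f^{a,γ} = I(f)·X^γ for all f ∈ 𝓛, a ∈ F, γ ∈ Γ. Moreover 𝓛(F) is closed under translation by elements of F, ∫^F is translation-invariant (for g ∈ 𝓛(F) and τ ∈ F, the function x ↦ g(x+τ) lies in 𝓛(F) and has the same integral as g), and 𝓛(F) contains no nonzero constant function. -/

import Mathlib

/-!
Fix a finite relation `∑ cᵢ fᵢ^{aᵢ,γᵢ} = 0` and let `M` be the largest level `γᵢ`. Moving the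
argument from `b` to `b + w t(M)` with `w ∈ O_F` leaves the lifts of lower level unchanged and
translates the residue argument of the lifts of level `M` by `ρ(w)`. Hence, near every `b`, the
level-`M` part is a `ℂ(Γ)`-combination of translates of functions of `𝓛` which is constant on `k`.
Testing against `ℂ`-linear forms on `ℂ(Γ)`, the absence of constants in `𝓛` forces this constant
to be `0` and, by translation invariance of `I`, the corresponding combination of the `I(fᵢ)` to
vanish on every ball `a + t(M)O_F`. Induction on the levels gives `∑_{γᵢ = δ} cᵢ I(fᵢ) = 0` for
every `δ`, so `f^{a,γ} ↦ I(f) X^γ` extends to a well-defined linear functional.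

Translating by `τ` replaces `f^{a,γ}` by `f^{a-τ,γ}`, so invariance follows from uniqueness. Every
element of `𝓛(F)` vanishes outside some ball `t(δ)O_F`, which rules out nonzero constants.
-/

noncomputable section

open MeasureTheory

/-- A field `F` with a split valuation `ν : F^× → Γ` (split by `t`), with residue field `k`,
residue map `ρ : O_F → k`, where `Γ` has a minimal positive element `one`. -/
structure LiftSetup (Γ F k : Type*) [AddCommGroup Γ] [LinearOrder Γ] [IsOrderedAddMonoid Γ] [Field F] [Field k] where
  /-- the valuation (recorded on nonzero elements) -/
  ν : F → Γ
  /-- the splitting homomorphism `t : Γ → F^×` -/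
  t : Γ → F
  /-- the residue map (recorded on the valuation ring) -/
  ρ : F → k
  /-- the minimal positive element of `Γ` -/
  one : Γ
  one_pos : 0 < one
  one_min : ∀ γ : Γ, 0 < γ → one ≤ γ
  ν_mul : ∀ x y : F, x ≠ 0 → y ≠ 0 → ν (x * y) = ν x + ν y
  ν_add : ∀ x y : F, x ≠ 0 → y ≠ 0 → x + y ≠ 0 → min (ν x) (ν y) ≤ ν (x + y)
  t_ne : ∀ γ : Γ, t γ ≠ 0
  t_add : ∀ γ δ : Γ, t (γ + δ) = t γ * t δ
  ν_t : ∀ γ : Γ, ν (t γ) = γ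
  ρ_add : ∀ x y : F, (x = 0 ∨ 0 ≤ ν x) → (y = 0 ∨ 0 ≤ ν y) → ρ (x + y) = ρ x + ρ y
  ρ_mul : ∀ x y : F, (x = 0 ∨ 0 ≤ ν x) → (y = 0 ∨ 0 ≤ ν y) → ρ (x * y) = ρ x * ρ y
  ρ_one : ρ 1 = 1
  ρ_surj : ∀ u : k, ∃ x : F, (x = 0 ∨ 0 ≤ ν x) ∧ ρ x = u
  ρ_eq_zero : ∀ x : F, (x = 0 ∨ 0 ≤ ν x) → (ρ x = 0 ↔ (x = 0 ∨ 0 < ν x))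

namespace LiftSetup

variable {Γ F k : Type*} [AddCommGroup Γ] [LinearOrder Γ] [IsOrderedAddMonoid Γ] [Field F] [Field k]
variable (S : LiftSetup Γ F k)

/-- The ring of integers `O_F` of the valuation. -/
def integers : Set F := {x | x = 0 ∨ 0 ≤ S.ν x}

/-- The translated fractional ideal `a + t(γ)O_F`. -/
def fracIdeal (a : F) (γ : Γ) : Set F := {x | (x - a) * S.t (-γ) ∈ S.integers}

/-- The lift `f^{a,γ}` of a function `f` on the residue field `k`:
`f^{a,γ}(x) = f(ρ((x-a)t(-γ)))` for `x ∈ a + t(γ)O_F` and `0` otherwise. -/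
def lift {A : Type*} [Zero A] (f : k → A) (a : F) (γ : Γ) : F → A :=
  (S.fracIdeal a γ).indicator fun x => f (S.ρ ((x - a) * S.t (-γ)))

/-- The homomorphism `η : F^× → k^×`, `x ↦ ρ(x t(-ν x))`. -/
def η (x : F) : k := S.ρ (x * S.t (-S.ν x))

end LiftSetup

section CGamma

variable (Γ : Type*) [AddCommGroup Γ] [LinearOrder Γ] [IsOrderedAddMonoid Γ]

instance : IsDomain (AddMonoidAlgebra ℂ Γ) := NoZeroDivisors.to_isDomain _

/-- `ℂ(Γ)`: the field of fractions of the complex group algebra of `Γ`. -/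
abbrev CGamma : Type _ := FractionRing (AddMonoidAlgebra ℂ Γ)

/-- The canonical embedding `ℂ → ℂ(Γ)`. -/
def embC : ℂ →+* CGamma Γ :=
  (algebraMap (AddMonoidAlgebra ℂ Γ) (CGamma Γ)).comp AddMonoidAlgebra.singleZeroRingHom

variable {Γ}

/-- The basis element `X^γ` of `ℂ(Γ)`. -/
def Xp (γ : Γ) : CGamma Γ :=
  algebraMap (AddMonoidAlgebra ℂ Γ) (CGamma Γ) (AddMonoidAlgebra.single γ 1)

end CGamma

section Statement2

variable {Γ F k : Type*} [AddCommGroup Γ] [LinearOrder Γ] [IsOrderedAddMonoid Γ] [Field F] [Field k]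

/-- `𝓛(F)`: the `ℂ(Γ)`-span of the lifts `f^{a,γ}` of functions `f ∈ 𝓛`. -/
def LFspan (S : LiftSetup Γ F k) (𝓛 : Submodule ℂ (k → ℂ)) :
    Submodule (CGamma Γ) (F → CGamma Γ) :=
  Submodule.span (CGamma Γ)
    {g | ∃ f : k → ℂ, f ∈ 𝓛 ∧ ∃ (a : F) (γ : Γ), g = S.lift (fun u => embC Γ (f u)) a γ}

theorem liftC_mem (S : LiftSetup Γ F k) (𝓛 : Submodule ℂ (k → ℂ))
    {f : k → ℂ} (hf : f ∈ 𝓛) (a : F) (γ : Γ) :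
    S.lift (fun u => embC Γ (f u)) a γ ∈ LFspan S 𝓛 :=
  Submodule.subset_span ⟨f, hf, a, γ, rfl⟩

theorem exists_linearMap_span_range_of_ker_le {R M N ι : Type*} [Ring R] [AddCommGroup M]
    [Module R M] [AddCommGroup N] [Module R N] (v : ι → M) (w : ι → N)
    (h : ∀ l : ι →₀ R,
      Finsupp.linearCombination R v l = 0 → Finsupp.linearCombination R w l = 0) :
    ∃ J : Submodule.span R (Set.range v) →ₗ[R] N,
      ∀ i, J ⟨v i, Submodule.subset_span (Set.mem_range_self i)⟩ = w i := by
  set ℓ := Finsupp.linearCombination R v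
  have hker : LinearMap.ker ℓ ≤ LinearMap.ker (Finsupp.linearCombination R w) := h
  refine ⟨(LinearMap.ker ℓ).liftQ _ hker ∘ₗ ℓ.quotKerEquivRange.symm.toLinearMap ∘ₗ
    (LinearEquiv.ofEq _ _ (Finsupp.range_linearCombination R).symm).toLinearMap, fun i => ?_⟩
  have hvi : LinearEquiv.ofEq _ _ (Finsupp.range_linearCombination R).symm
      ⟨v i, Submodule.subset_span (Set.mem_range_self i)⟩ =
        ⟨ℓ (Finsupp.single i 1), LinearMap.mem_range_self ℓ _⟩ :=
    Subtype.ext (by simp [ℓ])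
  simp only [LinearMap.comp_apply, LinearEquiv.coe_coe]
  rw [hvi, LinearMap.quotKerEquivRange_symm_apply_image, Submodule.mkQ_apply, Submodule.liftQ_apply,
    Finsupp.linearCombination_single, one_smul]

theorem const_eq_zero_and_sum_smul_eq_zero {K V X ι : Type*} [Field K] [AddCommGroup V]
    [Module K V] {𝓛 : Submodule K (X → K)} (h𝓛const : ∀ c : K, (fun _ : X => c) ∈ 𝓛 → c = 0)
    (I : 𝓛 →ₗ[K] K) (s : Finset ι) (c : ι → V) (h : ι → 𝓛) (d : V)
    (hd : ∀ u, ∑ i ∈ s, (h i : X → K) u • c i = d) :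
    d = 0 ∧ ∑ i ∈ s, I (h i) • c i = 0 := by
  suffices key : ∀ φ : Module.Dual K V, φ d = 0 ∧ φ (∑ i ∈ s, I (h i) • c i) = 0 from
    ⟨(Module.forall_dual_apply_eq_zero_iff K d).mp fun φ => (key φ).1,
      (Module.forall_dual_apply_eq_zero_iff K _).mp fun φ => (key φ).2⟩
  intro φ
  -- `φ` turns the relation into a constant function in `𝓛`
  set g : 𝓛 := ∑ i ∈ s, φ (c i) • h i
  have hg : (g : X → K) = fun _ => φ d := by
    ext u
    simp [g, ← hd u, Finset.sum_apply, mul_comm]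
  have hφd : φ d = 0 := h𝓛const _ (hg ▸ g.2)
  have hg0 : g = 0 := Subtype.ext (by rw [hg, hφd]; rfl)
  refine ⟨hφd, ?_⟩
  simpa [g, mul_comm] using congrArg I hg0

namespace LiftSetup

variable (S : LiftSetup Γ F k)

theorem ν_one : S.ν 1 = 0 := by
  simpa using S.ν_mul 1 1 one_ne_zero one_ne_zero

theorem t_zero : S.t 0 = 1 :=
  mul_left_cancel₀ (S.t_ne 0) (by rw [← S.t_add, add_zero, mul_one])

theorem t_mul_t_neg (γ : Γ) : S.t γ * S.t (-γ) = 1 := by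
  rw [← S.t_add, add_neg_cancel, t_zero]

theorem t_mem_integers {γ : Γ} (hγ : 0 ≤ γ) : S.t γ ∈ S.integers :=
  Or.inr (by rwa [S.ν_t])

theorem mul_mem_integers {x y : F} (hx : x ∈ S.integers) (hy : y ∈ S.integers) :
    x * y ∈ S.integers := by
  rcases eq_or_ne x 0 with rfl | hx0
  · exact Or.inl (zero_mul y)
  rcases eq_or_ne y 0 with rfl | hy0
  · exact Or.inl (mul_zero x)
  exact Or.inr (S.ν_mul x y hx0 hy0 ▸ add_nonneg (hx.resolve_left hx0) (hy.resolve_left hy0))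

theorem add_mem_integers {x y : F} (hx : x ∈ S.integers) (hy : y ∈ S.integers) :
    x + y ∈ S.integers := by
  rcases eq_or_ne x 0 with rfl | hx0
  · simpa using hy
  rcases eq_or_ne y 0 with rfl | hy0
  · simpa using hx
  rcases eq_or_ne (x + y) 0 with hxy | hxy
  · exact Or.inl hxy
  exact Or.inr ((le_min (hx.resolve_left hx0) (hy.resolve_left hy0)).trans
    (S.ν_add x y hx0 hy0 hxy))

theorem neg_one_mem_integers : (-1 : F) ∈ S.integers := by
  refine Or.inr (not_lt.mp fun hneg => ?_)
  have h := S.ν_mul (-1) (-1) (by simp) (by simp)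
  rw [neg_one_mul, neg_neg, S.ν_one] at h
  exact (add_neg hneg hneg).ne h.symm

def integersSubring : Subring F where
  carrier := S.integers
  mul_mem' := S.mul_mem_integers
  one_mem' := Or.inr S.ν_one.ge
  add_mem' := S.add_mem_integers
  zero_mem' := Or.inl rfl
  neg_mem' hx := by simpa using S.mul_mem_integers S.neg_one_mem_integers hx

theorem ρ_eq_zero_of_pos_ν {x : F} (hx : x = 0 ∨ 0 < S.ν x) : S.ρ x = 0 :=
  (S.ρ_eq_zero x (hx.imp_right le_of_lt)).mpr hx

theorem mem_fracIdeal_self (a : F) (γ : Γ) : a ∈ S.fracIdeal a γ := by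
  change (a - a) * S.t (-γ) ∈ S.integers
  rw [sub_self, zero_mul]
  exact Or.inl rfl

theorem fracIdeal_eq_of_mem {a b : F} {γ : Γ} (h : b ∈ S.fracIdeal a γ) :
    S.fracIdeal b γ = S.fracIdeal a γ := by
  ext x
  have hx : (x - a) * S.t (-γ) = (x - b) * S.t (-γ) + (b - a) * S.t (-γ) := by ring
  change (x - b) * S.t (-γ) ∈ S.integersSubring ↔ (x - a) * S.t (-γ) ∈ S.integersSubring
  rw [hx]
  exact (add_mem_cancel_right h).symm

theorem fracIdeal_eq_fracIdeal_iff {a b : F} {γ : Γ} :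
    S.fracIdeal a γ = S.fracIdeal b γ ↔ b ∈ S.fracIdeal a γ :=
  ⟨fun h => h ▸ S.mem_fracIdeal_self b γ, fun h => (S.fracIdeal_eq_of_mem h).symm⟩

theorem fracIdeal_mono (a : F) {γ δ : Γ} (h : δ ≤ γ) : S.fracIdeal a γ ⊆ S.fracIdeal a δ := by
  intro x hx
  have ht : S.t (-δ) = S.t (-γ) * S.t (γ - δ) := by rw [← S.t_add]; abel_nf
  change (x - a) * S.t (-δ) ∈ S.integers
  rw [ht, ← mul_assoc]
  exact S.mul_mem_integers hx (S.t_mem_integers (sub_nonneg.mpr h))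

theorem mem_fracIdeal_zero_ν (a : F) : a ∈ S.fracIdeal 0 (S.ν a) := by
  rcases eq_or_ne a 0 with rfl | ha
  · exact S.mem_fracIdeal_self 0 _
  refine Or.inr (le_of_eq ?_)
  rw [sub_zero, S.ν_mul _ _ ha (S.t_ne _), S.ν_t, add_neg_cancel]

theorem exists_fracIdeal_subset_fracIdeal_zero (a : F) (γ : Γ) :
    ∃ δ, S.fracIdeal a γ ⊆ S.fracIdeal 0 δ := by
  refine ⟨min γ (S.ν a), (S.fracIdeal_mono a (min_le_left _ _)).trans (S.fracIdeal_eq_of_mem ?_).le⟩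
  exact S.fracIdeal_mono 0 (min_le_right _ _) (S.mem_fracIdeal_zero_ν a)

theorem t_sub_one_notMem_fracIdeal_zero (δ : Γ) : S.t (δ - S.one) ∉ S.fracIdeal 0 δ := by
  change ¬ (S.t (δ - S.one) - 0) * S.t (-δ) ∈ S.integers
  rw [sub_zero, ← S.t_add, show δ - S.one + -δ = -S.one by abel]
  rintro (h | h)
  · exact S.t_ne _ h
  · rw [S.ν_t] at h
    exact (neg_neg_of_pos S.one_pos).not_ge h

theorem lift_comp_apply {A B : Type*} [Zero A] [Zero B] {g : A → B} (hg : g 0 = 0) (f : k → A)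
    (a : F) (γ : Γ) (x : F) : S.lift (fun u => g (f u)) a γ x = g (S.lift f a γ x) :=
  congrFun (Set.indicator_comp_of_zero (s := S.fracIdeal a γ) hg) x

theorem support_lift_subset {A : Type*} [Zero A] (f : k → A) (a : F) (γ : Γ) :
    Function.support (S.lift f a γ) ⊆ S.fracIdeal a γ :=
  Set.support_indicator_subset

theorem lift_comp_add_right {A : Type*} [Zero A] (f : k → A) (a : F) (γ : Γ) (τ : F) :
    S.lift f a γ ∘ (· + τ) = S.lift f (a - τ) γ := by
  classical
  funext x
  simp only [Function.comp_apply, lift, fracIdeal, Set.indicator_apply, Set.mem_ofPred_eq,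
    show x + τ - a = x - (a - τ) by ring]

theorem lift_add_apply {A : Type*} [Zero A] (f : k → A) (a b y : F) (γ : Γ)
    (hy : y * S.t (-γ) ∈ S.integers) :
    S.lift f a γ (b + y) = S.lift (fun v => f (S.ρ (y * S.t (-γ)) + v)) a γ b := by
  classical
  have hx : (b + y - a) * S.t (-γ) = y * S.t (-γ) + (b - a) * S.t (-γ) := by ring
  have hmem : b + y ∈ S.fracIdeal a γ ↔ b ∈ S.fracIdeal a γ := by
    change _ ∈ S.integersSubring ↔ _ ∈ S.integersSubring
    rw [hx]
    exact add_mem_cancel_left hy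
  simp only [lift, Set.indicator_apply, hmem]
  split_ifs with hb
  · rw [hx, S.ρ_add _ _ hy hb]
  · rfl

theorem lift_add_mul_t_apply {A : Type*} [Zero A] (f : k → A) (a b : F) (γ : Γ) {w : F}
    (hw : w ∈ S.integers) :
    S.lift f a γ (b + w * S.t γ) = S.lift (fun v => f (S.ρ w + v)) a γ b := by
  have h : w * S.t γ * S.t (-γ) = w := by rw [mul_assoc, S.t_mul_t_neg, mul_one]
  rw [S.lift_add_apply f a b _ γ (by rwa [h]), h]

theorem lift_add_mul_t_apply_of_lt {A : Type*} [Zero A] (f : k → A) (a b : F) {γ δ : Γ}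
    (hγδ : γ < δ) {w : F} (hw : w ∈ S.integers) :
    S.lift f a γ (b + w * S.t δ) = S.lift f a γ b := by
  have h : w * S.t δ * S.t (-γ) = w * S.t (δ - γ) := by
    rw [mul_assoc, ← S.t_add, sub_eq_add_neg]
  have hmem : w * S.t (δ - γ) ∈ S.integers :=
    S.mul_mem_integers hw (S.t_mem_integers (sub_pos.mpr hγδ).le)
  have hρ : S.ρ (w * S.t (δ - γ)) = 0 := by
    refine S.ρ_eq_zero_of_pos_ν ?_
    rcases eq_or_ne w 0 with rfl | hw0
    · exact Or.inl (zero_mul _)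
    · rw [S.ν_mul _ _ hw0 (S.t_ne _), S.ν_t]
      exact Or.inr (add_pos_of_nonneg_of_pos (hw.resolve_left hw0) (sub_pos.mpr hγδ))
  rw [S.lift_add_apply f a b _ γ (by rwa [h]), h, hρ]
  simp only [zero_add]

end LiftSetup

section LevelSums

variable {K V ι : Type*} [Field K] [AddCommGroup V] [Module K V]

open scoped Classical in
theorem LiftSetup.sum_lift_smul_top_level (S : LiftSetup Γ F k) {𝓛 : Submodule K (k → K)}
    (h𝓛trans : ∀ f ∈ 𝓛, ∀ c : k, (fun u => f (u + c)) ∈ 𝓛)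
    (h𝓛const : ∀ c : K, (fun _ : k => c) ∈ 𝓛 → c = 0) (I : 𝓛 →ₗ[K] K)
    (hI : ∀ (f : k → K) (hf : f ∈ 𝓛) (c : k),
      I ⟨fun u => f (u + c), h𝓛trans f hf c⟩ = I ⟨f, hf⟩)
    {s : Finset ι} {c : ι → V} {f : ι → 𝓛} {a : ι → F} {γ : ι → Γ} {M : Γ}
    (hM : ∀ i ∈ s, γ i ≤ M) (hrel : ∀ x, ∑ i ∈ s, S.lift (f i : k → K) (a i) (γ i) x • c i = 0)
    (b : F) :
    ∑ i ∈ s with γ i ≠ M, S.lift (f i : k → K) (a i) (γ i) b • c i = 0 ∧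
      ∑ i ∈ {i ∈ s | γ i = M} with b ∈ S.fracIdeal (a i) M, I (f i) • c i = 0 := by
  set T := {i ∈ {i ∈ s | γ i = M} | b ∈ S.fracIdeal (a i) M}
  let r : ι → k := fun i => S.ρ ((b - a i) * S.t (-M))
  let h : ι → 𝓛 := fun i => ⟨fun u => (f i : k → K) (u + r i), h𝓛trans _ (f i).2 _⟩
  -- near `b`, the top-level lifts are translates of the `f i`, the lower ones are constant
  have hconst : ∀ u, ∑ i ∈ T, (h i : k → K) u • c i =
      -∑ i ∈ s with γ i ≠ M, S.lift (f i : k → K) (a i) (γ i) b • c i := by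
    intro u
    obtain ⟨w, hw, rfl⟩ := S.ρ_surj u
    have htop : ∑ i ∈ s with γ i = M, S.lift (f i : k → K) (a i) (γ i) (b + w * S.t M) • c i =
        ∑ i ∈ T, (h i : k → K) (S.ρ w) • c i := by
      rw [Finset.sum_filter (s := {i ∈ s | γ i = M})]
      refine Finset.sum_congr rfl fun i hi => ?_
      rw [(Finset.mem_filter.mp hi).2, S.lift_add_mul_t_apply _ _ _ _ hw]
      simp only [LiftSetup.lift, Set.indicator_apply]
      split_ifs <;> simp [h, r]
    have hlow : ∑ i ∈ s with γ i ≠ M, S.lift (f i : k → K) (a i) (γ i) (b + w * S.t M) • c i =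
        ∑ i ∈ s with γ i ≠ M, S.lift (f i : k → K) (a i) (γ i) b • c i :=
      Finset.sum_congr rfl fun i hi => by
        obtain ⟨his, hiM⟩ := Finset.mem_filter.mp hi
        rw [S.lift_add_mul_t_apply_of_lt _ _ _ (lt_of_le_of_ne (hM i his) hiM) hw]
    rw [eq_neg_iff_add_eq_zero, ← htop, ← hlow, Finset.sum_filter_add_sum_filter_not]
    exact hrel _
  obtain ⟨hlow, htop⟩ := const_eq_zero_and_sum_smul_eq_zero h𝓛const I T c h _ hconst
  refine ⟨neg_eq_zero.mp hlow, htop ▸ Finset.sum_congr rfl fun i _ => ?_⟩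
  exact congrArg (· • c i) (hI _ (f i).2 (r i)).symm

theorem LiftSetup.sum_level_smul_eq_zero (S : LiftSetup Γ F k) {𝓛 : Submodule K (k → K)}
    (h𝓛trans : ∀ f ∈ 𝓛, ∀ c : k, (fun u => f (u + c)) ∈ 𝓛)
    (h𝓛const : ∀ c : K, (fun _ : k => c) ∈ 𝓛 → c = 0) (I : 𝓛 →ₗ[K] K)
    (hI : ∀ (f : k → K) (hf : f ∈ 𝓛) (c : k),
      I ⟨fun u => f (u + c), h𝓛trans f hf c⟩ = I ⟨f, hf⟩)
    {s : Finset ι} {c : ι → V} {f : ι → 𝓛} {a : ι → F} {γ : ι → Γ}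
    (hrel : ∀ x, ∑ i ∈ s, S.lift (f i : k → K) (a i) (γ i) x • c i = 0) (δ : Γ) :
    ∑ i ∈ s with γ i = δ, I (f i) • c i = 0 := by
  classical
  induction s using Finset.strongInduction generalizing δ with
  | H s ih =>
  rcases s.eq_empty_or_nonempty with rfl | hs
  · simp
  set M := s.sup' hs γ
  have hsplit := S.sum_lift_smul_top_level h𝓛trans h𝓛const I hI (M := M)
    (fun i hi => Finset.le_sup' γ hi) hrel
  by_cases hδ : δ = M
  · subst hδ
    -- group the top-level indices by the ball `a i + t(M)O_F`
    rw [← Finset.sum_image' (f := 0) (g := fun i => S.fracIdeal (a i) M)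
      (fun i => I (f i) • c i) fun j _ => ?_]
    · simp
    rw [Pi.zero_apply, ← (hsplit (a j)).2]
    exact Finset.sum_congr
      (Finset.filter_congr fun i _ => S.fracIdeal_eq_fracIdeal_iff).symm fun _ _ => rfl
  · have hsub : {i ∈ s | γ i ≠ M} ⊂ s := by
      obtain ⟨j, hj, hjM⟩ := Finset.exists_mem_eq_sup' hs γ
      exact Finset.filter_ssubset.mpr ⟨j, hj, not_not.mpr hjM.symm⟩
    have hlow := ih _ hsub (fun x => (hsplit x).1) δ
    rw [Finset.filter_filter] at hlow
    convert hlow using 2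
    exact Finset.filter_congr fun i _ => ⟨fun h => ⟨by rwa [h], h⟩, And.right⟩

end LevelSums

theorem embC_mul_eq_smul {Γ : Type*} [AddCommGroup Γ] (z : ℂ) (c : CGamma Γ) :
    embC Γ z * c = z • c := by
  rw [Algebra.smul_def, IsScalarTower.algebraMap_apply ℂ (AddMonoidAlgebra ℂ Γ) (CGamma Γ)]
  rfl

def IsLiftIntegral (S : LiftSetup Γ F k) (𝓛 : Submodule ℂ (k → ℂ)) (I : 𝓛 →ₗ[ℂ] ℂ)
    (J : LFspan S 𝓛 →ₗ[CGamma Γ] CGamma Γ) : Prop :=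
  ∀ (f : k → ℂ) (hf : f ∈ 𝓛) (a : F) (γ : Γ),
    J ⟨S.lift (fun u => embC Γ (f u)) a γ, liftC_mem S 𝓛 hf a γ⟩ = embC Γ (I ⟨f, hf⟩) * Xp γ

theorem exists_isLiftIntegral (S : LiftSetup Γ F k) (𝓛 : Submodule ℂ (k → ℂ))
    (h𝓛trans : ∀ f ∈ 𝓛, ∀ c : k, (fun u => f (u + c)) ∈ 𝓛)
    (h𝓛const : ∀ c : ℂ, (fun _ : k => c) ∈ 𝓛 → c = 0) (I : 𝓛 →ₗ[ℂ] ℂ)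
    (hI : ∀ (f : k → ℂ) (hf : f ∈ 𝓛) (c : k),
      I ⟨fun u => f (u + c), h𝓛trans f hf c⟩ = I ⟨f, hf⟩) :
    ∃ J, IsLiftIntegral S 𝓛 I J := by
  classical
  let v : 𝓛 × F × Γ → F → CGamma Γ := fun p =>
    S.lift (fun u => embC Γ ((p.1 : k → ℂ) u)) p.2.1 p.2.2
  let w : 𝓛 × F × Γ → CGamma Γ := fun p => embC Γ (I p.1) * Xp p.2.2
  have hspan : LFspan S 𝓛 = Submodule.span (CGamma Γ) (Set.range v) := by
    refine congrArg _ (Set.ext fun g => ⟨?_, ?_⟩)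
    · rintro ⟨f, hf, a, γ, rfl⟩
      exact ⟨(⟨f, hf⟩, a, γ), rfl⟩
    · rintro ⟨⟨f, a, γ⟩, rfl⟩
      exact ⟨f, f.2, a, γ, rfl⟩
  suffices hker : ∀ l : 𝓛 × F × Γ →₀ CGamma Γ, Finsupp.linearCombination _ v l = 0 →
      Finsupp.linearCombination _ w l = 0 by
    obtain ⟨J, hJ⟩ := exists_linearMap_span_range_of_ker_le v w hker
    exact ⟨J ∘ₗ (LinearEquiv.ofEq _ _ hspan).toLinearMap, fun f hf a γ => hJ (⟨f, hf⟩, a, γ)⟩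
  intro l hl
  have hrel : ∀ x, ∑ p ∈ l.support, S.lift (p.1 : k → ℂ) p.2.1 p.2.2 x • l p = 0 := by
    intro x
    have hx := congrFun hl x
    rw [Finsupp.linearCombination_apply, Finsupp.sum, Finset.sum_apply, Pi.zero_apply] at hx
    rw [← hx]
    refine Finset.sum_congr rfl fun p _ => ?_
    rw [← embC_mul_eq_smul, ← S.lift_comp_apply (map_zero (embC Γ)), mul_comm]
    rfl
  -- the relation holds level by level, and `Xp δ` factors out of each level
  rw [Finsupp.linearCombination_apply, Finsupp.sum,
    ← Finset.sum_fiberwise_of_maps_to (g := fun p => p.2.2) (t := l.support.image fun p => p.2.2)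
      fun p hp => Finset.mem_image_of_mem _ hp]
  refine Finset.sum_eq_zero fun δ _ => ?_
  calc ∑ p ∈ l.support with p.2.2 = δ, l p • w p
      = (∑ p ∈ l.support with p.2.2 = δ, I p.1 • l p) * Xp δ := by
        rw [Finset.sum_mul]
        refine Finset.sum_congr rfl fun p hp => ?_
        rw [← (Finset.mem_filter.mp hp).2, smul_eq_mul, ← embC_mul_eq_smul]
        ring
    _ = 0 := by rw [S.sum_level_smul_eq_zero h𝓛trans h𝓛const I hI hrel, zero_mul]

theorem LFspan.linearMap_ext {N : Type*} [AddCommGroup N] [Module (CGamma Γ) N]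
    {S : LiftSetup Γ F k} {𝓛 : Submodule ℂ (k → ℂ)} {J₁ J₂ : LFspan S 𝓛 →ₗ[CGamma Γ] N}
    (h : ∀ (f : k → ℂ) (hf : f ∈ 𝓛) (a : F) (γ : Γ),
      J₁ ⟨_, liftC_mem S 𝓛 hf a γ⟩ = J₂ ⟨_, liftC_mem S 𝓛 hf a γ⟩) :
    J₁ = J₂ :=
  LinearMap.ext_on Submodule.span_span_coe_preimage <| by
    rintro ⟨_, _⟩ ⟨f, hf, a, γ, rfl⟩
    exact h f hf a γ

theorem IsLiftIntegral.unique {S : LiftSetup Γ F k} {𝓛 : Submodule ℂ (k → ℂ)} {I : 𝓛 →ₗ[ℂ] ℂ}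
    {J₁ J₂ : LFspan S 𝓛 →ₗ[CGamma Γ] CGamma Γ} (h₁ : IsLiftIntegral S 𝓛 I J₁)
    (h₂ : IsLiftIntegral S 𝓛 I J₂) : J₁ = J₂ :=
  LFspan.linearMap_ext fun f hf a γ => (h₁ f hf a γ).trans (h₂ f hf a γ).symm

theorem LFspan_le_comap_funLeft (S : LiftSetup Γ F k) (𝓛 : Submodule ℂ (k → ℂ)) (τ : F) :
    LFspan S 𝓛 ≤ (LFspan S 𝓛).comap (LinearMap.funLeft (CGamma Γ) (CGamma Γ) (· + τ)) := by
  refine Submodule.span_le.mpr ?_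
  rintro _ ⟨f, hf, a, γ, rfl⟩
  rw [SetLike.mem_coe, Submodule.mem_comap]
  change S.lift (fun u => embC Γ (f u)) a γ ∘ (· + τ) ∈ LFspan S 𝓛
  rw [S.lift_comp_add_right]
  exact liftC_mem S 𝓛 hf (a - τ) γ

def LFspan.translate (S : LiftSetup Γ F k) (𝓛 : Submodule ℂ (k → ℂ)) (τ : F) :
    LFspan S 𝓛 →ₗ[CGamma Γ] LFspan S 𝓛 :=
  (LinearMap.funLeft (CGamma Γ) (CGamma Γ) (· + τ)).restrict fun _ hg =>
    LFspan_le_comap_funLeft S 𝓛 τ hg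

theorem IsLiftIntegral.comp_translate {S : LiftSetup Γ F k} {𝓛 : Submodule ℂ (k → ℂ)}
    {I : 𝓛 →ₗ[ℂ] ℂ} {J : LFspan S 𝓛 →ₗ[CGamma Γ] CGamma Γ} (hJ : IsLiftIntegral S 𝓛 I J)
    (τ : F) : J ∘ₗ LFspan.translate S 𝓛 τ = J :=
  LFspan.linearMap_ext fun f hf a γ => by
    have h : LFspan.translate S 𝓛 τ ⟨_, liftC_mem S 𝓛 hf a γ⟩ = ⟨_, liftC_mem S 𝓛 hf (a - τ) γ⟩ :=
      Subtype.ext (S.lift_comp_add_right (fun u => embC Γ (f u)) a γ τ)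
    rw [LinearMap.comp_apply, h, hJ f hf, hJ f hf]

theorem exists_support_subset_fracIdeal_zero {S : LiftSetup Γ F k} {𝓛 : Submodule ℂ (k → ℂ)}
    {g : F → CGamma Γ} (hg : g ∈ LFspan S 𝓛) : ∃ δ, Function.support g ⊆ S.fracIdeal 0 δ := by
  induction hg using Submodule.span_induction with
  | mem g hg =>
    obtain ⟨f, -, a, γ, rfl⟩ := hg
    obtain ⟨δ, hδ⟩ := S.exists_fracIdeal_subset_fracIdeal_zero a γ
    exact ⟨δ, (S.support_lift_subset _ a γ).trans hδ⟩
  | zero => exact ⟨0, by simp⟩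
  | add g₁ g₂ _ _ ih₁ ih₂ =>
    obtain ⟨δ₁, h₁⟩ := ih₁
    obtain ⟨δ₂, h₂⟩ := ih₂
    exact ⟨min δ₁ δ₂, (Function.support_add g₁ g₂).trans (Set.union_subset
      (h₁.trans (S.fracIdeal_mono 0 (min_le_left _ _)))
      (h₂.trans (S.fracIdeal_mono 0 (min_le_right _ _))))⟩
  | smul r g _ ih =>
    obtain ⟨δ, h⟩ := ih
    exact ⟨δ, (Function.support_const_smul_subset r g).trans h⟩

theorem eq_zero_of_const_mem_LFspan {S : LiftSetup Γ F k} {𝓛 : Submodule ℂ (k → ℂ)}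
    {c : CGamma Γ} (hc : (fun _ : F => c) ∈ LFspan S 𝓛) : c = 0 := by
  by_contra hc0
  obtain ⟨δ, hδ⟩ := exists_support_subset_fracIdeal_zero hc
  rw [Function.support_const hc0] at hδ
  exact S.t_sub_one_notMem_fracIdeal_zero δ (hδ (Set.mem_univ _))

/-- Given a translation-invariant linear functional `I` on `𝓛`, there is a
unique `ℂ(Γ)`-linear functional `∫^F` on `𝓛(F)` with `∫^F f^{a,γ} = I(f)·X^γ`; moreover
`𝓛(F)` is closed under translation, any such functional is translation-invariant, and `𝓛(F)`
contains no nonzero constant function. -/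
theorem statement2 (S : LiftSetup Γ F k)
    (𝓛 : Submodule ℂ (k → ℂ))
    (h𝓛trans : ∀ f ∈ 𝓛, ∀ c : k, (fun u => f (u + c)) ∈ 𝓛)
    (h𝓛const : ∀ c : ℂ, (fun _ : k => c) ∈ 𝓛 → c = 0)
    (I : 𝓛 →ₗ[ℂ] ℂ)
    (hI : ∀ (f : k → ℂ) (hf : f ∈ 𝓛) (c : k),
      I ⟨fun u => f (u + c), h𝓛trans f hf c⟩ = I ⟨f, hf⟩) :
    (∃! J : LFspan S 𝓛 →ₗ[CGamma Γ] CGamma Γ,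
       ∀ (f : k → ℂ) (hf : f ∈ 𝓛) (a : F) (γ : Γ),
         J ⟨S.lift (fun u => embC Γ (f u)) a γ, liftC_mem S 𝓛 hf a γ⟩
           = embC Γ (I ⟨f, hf⟩) * Xp γ) ∧
    (∀ g ∈ LFspan S 𝓛, ∀ τ : F, (fun x => g (x + τ)) ∈ LFspan S 𝓛) ∧
    (∀ J : LFspan S 𝓛 →ₗ[CGamma Γ] CGamma Γ,
       (∀ (f : k → ℂ) (hf : f ∈ 𝓛) (a : F) (γ : Γ),
         J ⟨S.lift (fun u => embC Γ (f u)) a γ, liftC_mem S 𝓛 hf a γ⟩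
           = embC Γ (I ⟨f, hf⟩) * Xp γ) →
       ∀ (g : F → CGamma Γ) (hg : g ∈ LFspan S 𝓛) (τ : F)
         (hg' : (fun x => g (x + τ)) ∈ LFspan S 𝓛),
         J ⟨fun x => g (x + τ), hg'⟩ = J ⟨g, hg⟩) ∧
    (∀ c : CGamma Γ, (fun _ : F => c) ∈ LFspan S 𝓛 → c = 0) := by
  obtain ⟨J, hJ⟩ := exists_isLiftIntegral S 𝓛 h𝓛trans h𝓛const I hI
  exact ⟨⟨J, hJ, fun J' hJ' => IsLiftIntegral.unique hJ' hJ⟩,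
    fun g hg τ => LFspan_le_comap_funLeft S 𝓛 τ hg,
    fun J' hJ' g hg τ _ => LinearMap.congr_fun (IsLiftIntegral.comp_translate hJ' τ) ⟨g, hg⟩,
    fun c hc => eq_zero_of_const_mem_LFspan hc⟩

end Statement2
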